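/- arXiv:2202.07480 — 2 statements merged into one kernel-verified Lean document; each statement's English description precedes it below -/
import Mathlib

section
/- Let ⟨G, Eℓ⟩ be a two-player game graph with live edges and let R = {(G_1, R_1), …, (G_k, R_k)} be a Rabin condition satisfying the chain condition R_1 ⊇ R_2 ⊇ … ⊇ R_k and G_1 ⊇ G_2 ⊇ … ⊇ G_k. Let Z* be the value of the permutation-based Rabin fixpoint: with p_0 := 0, G_{p_0} := ∅, R_{p_0} := ∅, Z* := νY_{p_0}. μX_{p_0}. ⋃_{p_1 ∈ P} νY_{p_1}. μX_{p_1}. ⋯ ⋃_{p_k ∈ P∖{p_1,…,p_{k−1}}} νY_{p_k}. μX_{p_k}. ⋃_{j=0}^{k} C_{p_j}, where C_{p_j} := ( ⋂_{i=0}^{j} (V ∖ R_{p_i}) ) ∩ [ (G_{p_j} ∩ Cpre(Y_{p_j})) ∪ Apre(Y_{p_j}, X_{p_j}) ] and P = {1,…,k}. Let Z̃* be the value of the chain fixpoint: with G_0 := ∅, R_0 := ∅, Z̃* := νY_0. μX_0. νY_k. μX_k. νY_{k−1}. μX_{k−1}. ⋯ νY_1. μX_1. ⋃_{j=0}^{k}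 C̃_j, where C̃_j := (V ∖ R_j) ∩ [ (G_j ∩ Cpre(Y_j)) ∪ Apre(Y_j, X_j) ]. Then Z* = Z̃*. -/
/-- Least fixed point of a set transformer (Knaster–Tarski form). -/
def lfpSet {V : Type*} (f : Set V → Set V) : Set V := sInf {X | f X ⊆ X}

/-- Greatest fixed point of a set transformer (Knaster–Tarski form). -/
def gfpSet {V : Type*} (f : Set V → Set V) : Set V := sSup {X | X ⊆ f X}

/-- A two-player game graph with live edges: vertices are partitioned into
Player-0 vertices `V0` and Player-1 vertices `V1`, every vertex has a successor,
and live edges `El` are Player-1 edges. -/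
structure LiveGameGraph (V : Type*) where
  V0 : Set V
  V1 : Set V
  E : V → V → Prop
  El : V → V → Prop
  cover : V0 ∪ V1 = Set.univ
  disj : V0 ∩ V1 = ∅
  succ_nonempty : ∀ v : V, ∃ w, E v w
  live_sub : ∀ v w, El v w → v ∈ V1 ∧ E v w

namespace LiveGameGraph

variable {V : Type*}

/-- Pre∃0(S) -/
def pre0 (Gm : LiveGameGraph V) (S : Set V) : Set V :=
  {v | v ∈ Gm.V0 ∧ ∃ w, Gm.E v w ∧ w ∈ S}

/-- Pre∀1(S) -/
def pre1 (Gm : LiveGameGraph V) (S : Set V) : Set V :=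
  {v | v ∈ Gm.V1 ∧ ∀ w, Gm.E v w → w ∈ S}

/-- Cpre(S) -/
def cpre (Gm : LiveGameGraph V) (S : Set V) : Set V := Gm.pre0 S ∪ Gm.pre1 S

/-- Lpre∃(T) -/
def lpre (Gm : LiveGameGraph V) (T : Set V) : Set V :=
  {v | ∃ w, Gm.El v w ∧ w ∈ T}

/-- Apre(S,T) -/
def apre (Gm : LiveGameGraph V) (S T : Set V) : Set V :=
  Gm.cpre T ∪ (Gm.lpre T ∩ Gm.pre1 S)

end LiveGameGraph

namespace LiveGameGraph

variable {V : Type*}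

/-- The nested permutation-based Rabin fixpoint, recursively peeling off one
permutation index at a time.  `avail` is the set of still-unchosen pair indices,
`Qcur` is the intersection ⋂ R̄ over the already-chosen prefix, and `acc` is the
union of the `C` terms of the already-chosen prefix (with their bound `Y`/`X`
values substituted in). -/
def rabinAux (Gm : LiveGameGraph V) (Gp Rp : ℕ → Set V) :
    ℕ → Finset ℕ → Set V → Set V → Set V
  | 0, _, _, acc => acc
  | n + 1, avail, Qcur, acc =>
      ⋃ p ∈ avail,
        gfpSet fun Y => lfpSet fun X =>
          Gm.rabinAux Gp Rp n (avail.erase p) (Qcur ∩ (Rp p)ᶜ)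
            (acc ∪ ((Qcur ∩ (Rp p)ᶜ) ∩ ((Gp p ∩ Gm.cpre Y) ∪ Gm.apre Y X)))

/-- The full permutation-based Rabin fixpoint Z* for pairs (G_1,R_1),…,(G_k,R_k),
with the artificial pair p_0 = 0, G_0 = ∅, R_0 = ∅ handled by the outermost
νY_0. μX_0. -/
def rabinZ (Gm : LiveGameGraph V) (Gp Rp : ℕ → Set V) (k : ℕ) : Set V :=
  gfpSet fun Y0 => lfpSet fun X0 =>
    Gm.rabinAux Gp Rp k (Finset.Icc 1 k) ((∅ : Set V)ᶜ)
      (((∅ : Set V)ᶜ) ∩ (((∅ : Set V) ∩ Gm.cpre Y0) ∪ Gm.apre Y0 X0))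

end LiveGameGraph

namespace LiveGameGraph

variable {V : Type*}

/-- The chain fixpoint νY_k.μX_k. … νY_1.μX_1 peeled off one index at a time,
from index `j` down to index `1`; `acc` is the union of the `C̃` terms for the
already-bound indices (with their bound `Y`/`X` values substituted in). -/
def chainAux (Gm : LiveGameGraph V) (Gp Rp : ℕ → Set V) : ℕ → Set V → Set V
  | 0, acc => acc
  | j + 1, acc =>
      gfpSet fun Y => lfpSet fun X =>
        Gm.chainAux Gp Rp j
          (acc ∪ ((Rp (j + 1))ᶜ ∩ ((Gp (j + 1) ∩ Gm.cpre Y) ∪ Gm.apre Y X)))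

/-- The full chain fixpoint Z̃* = νY_0.μX_0.νY_k.μX_k. … νY_1.μX_1. ⋃_j C̃_j for
pairs (G_1,R_1),…,(G_k,R_k), with the artificial pair G_0 = ∅, R_0 = ∅. -/
def chainZ (Gm : LiveGameGraph V) (Gp Rp : ℕ → Set V) (k : ℕ) : Set V :=
  gfpSet fun Y0 => lfpSet fun X0 =>
    Gm.chainAux Gp Rp k
      (((∅ : Set V)ᶜ) ∩ (((∅ : Set V) ∩ Gm.cpre Y0) ∪ Gm.apre Y0 X0))

end LiveGameGraph

/-!
Under the chain condition, once a pair `a` is bound in the permutation fixpoint, binding a later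
pair `b > a` changes nothing: `V ∖ R_b ⊇ V ∖ R_a` leaves the prefix intersection unchanged, and
`G_b ⊆ G_a` makes `C_b` dominated by `C_a` taken at a larger `Y`. Such a dominated inner
`νY. μX.` block can be dropped for arbitrary monotone operators, by `ν`-induction along the
approximants of the greatest fixpoint that remains. Hence every branch `p :: σ` of the union is
contained in the branch of the decreasing order `k, k - 1, …, 1`: move `p` past each larger
pair by absorbing that pair and re-adding it as an outer block. The decreasing branch is itself
one of the branches, and it is the chain fixpoint, because along it the prefix intersection is
just the last `V ∖ R_j`.
-/

section Fixpoints

variable {V : Type*} {f g : Set V → Set V}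

theorem lfpSet_le {T : Set V} (h : f T ⊆ T) : lfpSet f ⊆ T := sInf_le h

theorem subset_lfpSet {S : Set V} (h : ∀ X, S ⊆ f X) : S ⊆ lfpSet f :=
  le_sInf fun X hX => (h X).trans hX

theorem subset_gfpSet {S : Set V} (h : S ⊆ f S) : S ⊆ gfpSet f := le_sSup h

theorem lfpSet_mono (h : ∀ X, f X ⊆ g X) : lfpSet f ⊆ lfpSet g :=
  sInf_le_sInf fun X hX => (h X).trans hX

theorem gfpSet_mono (h : ∀ X, f X ⊆ g X) : gfpSet f ⊆ gfpSet g :=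
  sSup_le_sSup fun X hX => hX.trans (h X)

theorem map_lfpSet (hf : Monotone f) : f (lfpSet f) = lfpSet f := OrderHom.map_lfp ⟨f, hf⟩

theorem map_gfpSet (hf : Monotone f) : f (gfpSet f) = gfpSet f := OrderHom.map_gfp ⟨f, hf⟩

theorem gfpSet_induction (hf : Monotone f) {p : Set V → Prop} (step : ∀ Z, p Z → p (f Z))
    (hInf : ∀ s, (∀ Z ∈ s, p Z) → p (sInf s)) : p (gfpSet f) :=
  OrderHom.gfp_induction ⟨f, hf⟩ (fun Z hZ _ => step Z hZ) hInf

def nuMu (F : Set V → Set V → Set V) : Set V := gfpSet fun Y => lfpSet fun X => F Y X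

variable {F F' : Set V → Set V → Set V}

theorem nuMu_mono (h : ∀ Y X, F Y X ⊆ F' Y X) : nuMu F ⊆ nuMu F' :=
  gfpSet_mono fun Y => lfpSet_mono (h Y)

theorem subset_nuMu {S : Set V} (h : ∀ Y X, S ⊆ F Y X) : S ⊆ nuMu F :=
  subset_gfpSet (subset_lfpSet (h S))

theorem nuMu_eq_lfpSet (hF : ∀ X, Monotone (F · X)) : nuMu F = lfpSet (F (nuMu F)) :=
  (map_gfpSet fun _ _ hY => lfpSet_mono fun X => hF X hY).symm

theorem nuMu_nuMu_union_eq {H : Set V → Set V} {Ka Kb : Set V → Set V → Set V}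
    (hH : Monotone H) (hKa : ∀ ⦃Y Y' X X'⦄, Y ⊆ Y' → X ⊆ X' → Ka Y X ⊆ Ka Y' X')
    (hKb : ∀ X, Monotone (Kb · X)) (hdom : ∀ ⦃Y Y'⦄ X, Y ⊆ Y' → Kb Y X ⊆ Ka Y' X) :
    (nuMu fun Ya Xa => nuMu fun Yb Xb => H (Ka Ya Xa ∪ Kb Yb Xb)) =
      nuMu fun Ya Xa => H (Ka Ya Xa) := by
  set B : Set V → Set V → Set V := fun Ya Xa => nuMu fun Yb Xb => H (Ka Ya Xa ∪ Kb Yb Xb)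
  have hB : ∀ ⦃Y Y' X X'⦄, Y ⊆ Y' → X ⊆ X' → B Y X ⊆ B Y' X' := fun _ _ _ _ hY hX =>
    nuMu_mono fun _ _ => hH (Set.union_subset_union_left _ (hKa hY hX))
  set W := nuMu B
  have hW : W = lfpSet (B W) := nuMu_eq_lfpSet fun _ _ _ hY => hB hY subset_rfl
  set G : Set V → Set V := fun Y => lfpSet fun X => H (Ka Y X)
  have hG : Monotone G := fun _ _ hY => lfpSet_mono fun _ => hH (hKa hY subset_rfl)
  refine subset_antisymm ?_
    (nuMu_mono fun _ _ => subset_nuMu fun _ _ => hH Set.subset_union_left)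
  -- `ν`-induction on `B W Z ⊆ Z`; the conjunct `G Z ⊆ Z` yields `B W (G Z) ⊆ B W Z`.
  suffices h : B W (gfpSet G) ⊆ gfpSet G ∧ G (gfpSet G) ⊆ gfpSet G from
    hW.trans_subset (lfpSet_le h.1)
  refine gfpSet_induction (p := fun Z => B W Z ⊆ Z ∧ G Z ⊆ Z) hG
    (fun Z ⟨hBZ, hGZ⟩ => ⟨?_, hG hGZ⟩) fun s hs =>
    ⟨le_sInf fun Z hZ => (hB subset_rfl (sInf_le hZ)).trans (hs Z hZ).1,
      le_sInf fun Z hZ => (hG (sInf_le hZ)).trans (hs Z hZ).2⟩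
  have hWZ : W ⊆ Z := hW.trans_subset (lfpSet_le hBZ)
  have hBGZ : B W (G Z) ⊆ Z := (hB subset_rfl hGZ).trans hBZ
  have hGfix : H (Ka Z (G Z)) = G Z := map_lfpSet fun _ _ hX => hH (hKa subset_rfl hX)
  have hBfix : B W (G Z) = lfpSet fun X => H (Ka W (G Z) ∪ Kb (B W (G Z)) X) :=
    nuMu_eq_lfpSet fun X _ _ hY => hH (Set.union_subset_union_right _ (hKb X hY))
  rw [hBfix]
  refine lfpSet_le ?_
  calc H (Ka W (G Z) ∪ Kb (B W (G Z)) (G Z)) ⊆ H (Ka Z (G Z)) :=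
        hH (Set.union_subset (hKa hWZ subset_rfl) (hdom _ hBGZ))
    _ = G Z := hGfix

end Fixpoints

theorem antitoneOn_Icc_of_succ_le {β : Type*} [Preorder β] {f : ℕ → β} {m k : ℕ}
    (h : ∀ j, m ≤ j → j < k → f (j + 1) ≤ f j) : AntitoneOn f (Set.Icc m k) :=
  antitoneOn_of_add_one_le Set.ordConnected_Icc fun j _ hj hj' =>
    h j hj.1 (Nat.lt_of_succ_le hj'.2)

theorem Finset.sort_insert_eq_orderedInsert {α : Type*} [LinearOrder α] {s : Finset α} {p : α}
    (hp : p ∉ s) : (insert p s).sort (· ≥ ·) = (s.sort (· ≥ ·)).orderedInsert (· ≥ ·) p := by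
  refine List.Perm.eq_of_pairwise' (Finset.pairwise_sort _ _)
    ((Finset.pairwise_sort s _).orderedInsert p _) ?_
  rw [← Multiset.coe_eq_coe, Finset.sort_eq, Finset.insert_val_of_notMem hp,
    Multiset.coe_eq_coe.mpr (List.perm_orderedInsert _ p _), ← Multiset.cons_coe, Finset.sort_eq]

namespace LiveGameGraph

variable {V : Type*}

/-- The paper's `C_p`, where `Q` is the intersection of the `V ∖ R_{p_i}` over the prefix. -/
def cTerm (Gm : LiveGameGraph V) (Q g Y X : Set V) : Set V :=
  Q ∩ ((g ∩ Gm.cpre Y) ∪ Gm.apre Y X)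

/-- The permutation fixpoint along the single order `l = [p_1, …, p_n]` of the pairs. -/
def rabinSeq (Gm : LiveGameGraph V) (Gp Rp : ℕ → Set V) : List ℕ → Set V → Set V → Set V
  | [], _, acc => acc
  | p :: l, Q, acc => nuMu fun Y X =>
      Gm.rabinSeq Gp Rp l (Q ∩ (Rp p)ᶜ) (acc ∪ Gm.cTerm (Q ∩ (Rp p)ᶜ) (Gp p) Y X)

variable (Gm : LiveGameGraph V) {Gp Rp : ℕ → Set V}

theorem pre0_mono {S T : Set V} (h : S ⊆ T) : Gm.pre0 S ⊆ Gm.pre0 T :=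
  fun _ ⟨hv, w, hw, hwS⟩ => ⟨hv, w, hw, h hwS⟩

theorem pre1_mono {S T : Set V} (h : S ⊆ T) : Gm.pre1 S ⊆ Gm.pre1 T :=
  fun _ ⟨hv, hall⟩ => ⟨hv, fun w hw => h (hall w hw)⟩

theorem cpre_mono {S T : Set V} (h : S ⊆ T) : Gm.cpre S ⊆ Gm.cpre T :=
  Set.union_subset_union (Gm.pre0_mono h) (Gm.pre1_mono h)

theorem lpre_mono {S T : Set V} (h : S ⊆ T) : Gm.lpre S ⊆ Gm.lpre T :=
  fun _ ⟨w, hw, hwS⟩ => ⟨w, hw, h hwS⟩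

theorem apre_mono {S S' T T' : Set V} (hS : S ⊆ S') (hT : T ⊆ T') :
    Gm.apre S T ⊆ Gm.apre S' T' :=
  Set.union_subset_union (Gm.cpre_mono hT)
    (Set.inter_subset_inter (Gm.lpre_mono hT) (Gm.pre1_mono hS))

theorem cTerm_mono {Q Q' g g' Y Y' X X' : Set V} (hQ : Q ⊆ Q') (hg : g ⊆ g') (hY : Y ⊆ Y')
    (hX : X ⊆ X') : Gm.cTerm Q g Y X ⊆ Gm.cTerm Q' g' Y' X' :=
  Set.inter_subset_inter hQ
    (Set.union_subset_union (Set.inter_subset_inter hg (Gm.cpre_mono hY)) (Gm.apre_mono hY hX))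

theorem rabinSeq_mono (l : List ℕ) {Q Q' acc acc' : Set V} (hQ : Q ⊆ Q') (hacc : acc ⊆ acc') :
    Gm.rabinSeq Gp Rp l Q acc ⊆ Gm.rabinSeq Gp Rp l Q' acc' := by
  induction l generalizing Q Q' acc acc' with
  | nil => exact hacc
  | cons p l ih =>
    have hQp : Q ∩ (Rp p)ᶜ ⊆ Q' ∩ (Rp p)ᶜ := Set.inter_subset_inter_left _ hQ
    exact nuMu_mono fun Y X => ih hQp
      (Set.union_subset_union hacc (Gm.cTerm_mono hQp subset_rfl subset_rfl subset_rfl))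

theorem rabinSeq_cons_inter_compl {a b : ℕ} (hR : Rp b ⊆ Rp a) (l : List ℕ) (Q acc : Set V) :
    Gm.rabinSeq Gp Rp (a :: l) (Q ∩ (Rp b)ᶜ) acc = Gm.rabinSeq Gp Rp (a :: l) Q acc := by
  have hQ : Q ∩ (Rp b)ᶜ ∩ (Rp a)ᶜ = Q ∩ (Rp a)ᶜ := by
    rw [Set.inter_assoc, Set.inter_eq_right.mpr (Set.compl_subset_compl.mpr hR)]
  simp only [rabinSeq, hQ]

theorem rabinSeq_cons_cons_eq {a b : ℕ} (hR : Rp b ⊆ Rp a) (hG : Gp b ⊆ Gp a) (l : List ℕ)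
    (Q acc : Set V) :
    Gm.rabinSeq Gp Rp (a :: b :: l) Q acc = Gm.rabinSeq Gp Rp (a :: l) Q acc := by
  have hQ : Q ∩ (Rp a)ᶜ ∩ (Rp b)ᶜ = Q ∩ (Rp a)ᶜ :=
    Set.inter_eq_left.mpr (Set.inter_subset_right.trans (Set.compl_subset_compl.mpr hR))
  simp only [rabinSeq, hQ, Set.union_assoc]
  exact nuMu_nuMu_union_eq (H := fun S => Gm.rabinSeq Gp Rp l (Q ∩ (Rp a)ᶜ) (acc ∪ S))
    (Ka := Gm.cTerm (Q ∩ (Rp a)ᶜ) (Gp a)) (Kb := Gm.cTerm (Q ∩ (Rp a)ᶜ) (Gp b))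
    (fun _ _ h => Gm.rabinSeq_mono l subset_rfl (Set.union_subset_union_right _ h))
    (fun _ _ _ _ hY hX => Gm.cTerm_mono subset_rfl subset_rfl hY hX)
    (fun _ _ _ hY => Gm.cTerm_mono subset_rfl subset_rfl hY subset_rfl)
    (fun _ _ _ hY => Gm.cTerm_mono subset_rfl hG hY subset_rfl)

theorem rabinSeq_subset_cons {a b : ℕ} (hR : Rp b ⊆ Rp a) (l : List ℕ) (Q acc : Set V) :
    Gm.rabinSeq Gp Rp (a :: l) Q acc ⊆ Gm.rabinSeq Gp Rp (b :: a :: l) Q acc :=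
  (Gm.rabinSeq_cons_inter_compl hR l Q acc).symm.trans_subset
    (subset_nuMu fun _ _ => Gm.rabinSeq_mono _ subset_rfl Set.subset_union_left)

theorem rabinSeq_cons_subset_orderedInsert {s : Set ℕ} (hR : AntitoneOn Rp s)
    (hG : AntitoneOn Gp s) {p : ℕ} (hp : p ∈ s) (l : List ℕ) (hl : ∀ x ∈ l, x ∈ s)
    (Q acc : Set V) :
    Gm.rabinSeq Gp Rp (p :: l) Q acc ⊆ Gm.rabinSeq Gp Rp (l.orderedInsert (· ≥ ·) p) Q acc := by
  induction l generalizing Q acc with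
  | nil => exact subset_rfl
  | cons b t ih =>
    by_cases hpb : p ≥ b
    · rw [List.orderedInsert_cons_of_le _ _ hpb]
    have hb : b ∈ s := hl b List.mem_cons_self
    have hbp : p ≤ b := le_of_not_ge hpb
    have hRb : Rp b ⊆ Rp p := hR hp hb hbp
    rw [List.orderedInsert_of_not_le _ _ hpb, Gm.rabinSeq_cons_cons_eq hRb (hG hp hb hbp)]
    exact (Gm.rabinSeq_subset_cons hRb t Q acc).trans
      (nuMu_mono fun _ _ => ih (fun x hx => hl x (List.mem_cons_of_mem b hx)) _ _)

theorem rabinAux_succ (n : ℕ) (avail : Finset ℕ) (Q acc : Set V) :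
    Gm.rabinAux Gp Rp (n + 1) avail Q acc = ⋃ p ∈ avail, nuMu fun Y X =>
      Gm.rabinAux Gp Rp n (avail.erase p) (Q ∩ (Rp p)ᶜ)
        (acc ∪ Gm.cTerm (Q ∩ (Rp p)ᶜ) (Gp p) Y X) :=
  rfl

theorem chainAux_succ (j : ℕ) (acc : Set V) :
    Gm.chainAux Gp Rp (j + 1) acc =
      nuMu fun Y X => Gm.chainAux Gp Rp j (acc ∪ Gm.cTerm (Rp (j + 1))ᶜ (Gp (j + 1)) Y X) :=
  rfl

theorem rabinAux_eq_rabinSeq_sort {s : Set ℕ} (hR : AntitoneOn Rp s) (hG : AntitoneOn Gp s)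
    (n : ℕ) (avail : Finset ℕ) (hs : ↑avail ⊆ s) (hcard : avail.card = n) (Q acc : Set V) :
    Gm.rabinAux Gp Rp n avail Q acc = Gm.rabinSeq Gp Rp (avail.sort (· ≥ ·)) Q acc := by
  induction n generalizing avail Q acc with
  | zero => simp [Finset.card_eq_zero.mp hcard, rabinAux, rabinSeq]
  | succ n ih =>
    have hterm : ∀ p ∈ avail, (nuMu fun Y X => Gm.rabinAux Gp Rp n (avail.erase p) (Q ∩ (Rp p)ᶜ)
        (acc ∪ Gm.cTerm (Q ∩ (Rp p)ᶜ) (Gp p) Y X)) =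
        Gm.rabinSeq Gp Rp (p :: (avail.erase p).sort (· ≥ ·)) Q acc := fun p hp =>
      congrArg nuMu <| funext₂ fun _ _ =>
        ih _ ((Finset.coe_subset.mpr (Finset.erase_subset p avail)).trans hs)
        (by rw [Finset.card_erase_of_mem hp, hcard, Nat.add_sub_cancel]) _ _
    rw [rabinAux_succ, Set.iUnion₂_congr hterm]
    apply subset_antisymm
    · refine Set.iUnion₂_subset fun p hp => ?_
      have hsort :
          avail.sort (· ≥ ·) = ((avail.erase p).sort (· ≥ ·)).orderedInsert (· ≥ ·) p := by
        rw [← Finset.sort_insert_eq_orderedInsert (Finset.notMem_erase p avail),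
          Finset.insert_erase hp]
      rw [hsort]
      exact Gm.rabinSeq_cons_subset_orderedInsert hR hG (hs hp) _
        (fun x hx => hs (Finset.mem_of_mem_erase ((Finset.mem_sort _).mp hx))) Q acc
    · have hne : avail.Nonempty := Finset.card_pos.mp (hcard ▸ n.succ_pos)
      set m := avail.max' hne
      have hmax : m ∈ avail := avail.max'_mem hne
      have hsort : avail.sort (· ≥ ·) = m :: (avail.erase m).sort (· ≥ ·) := by
        conv_lhs => rw [← Finset.insert_erase hmax]
        exact Finset.sort_insert _ (fun b hb => avail.le_max' b (Finset.mem_of_mem_erase hb))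
          (Finset.notMem_erase _ _)
      rw [hsort]
      exact Set.subset_iUnion₂
        (s := fun p _ => Gm.rabinSeq Gp Rp (p :: (avail.erase p).sort (· ≥ ·)) Q acc) _ hmax

theorem chainAux_eq_rabinSeq_sort (j : ℕ) (hR : AntitoneOn Rp (Set.Icc 1 j)) (Q acc : Set V)
    (hQ : ∀ i ∈ Finset.Icc 1 j, (Rp i)ᶜ ⊆ Q) :
    Gm.chainAux Gp Rp j acc = Gm.rabinSeq Gp Rp ((Finset.Icc 1 j).sort (· ≥ ·)) Q acc := by
  induction j generalizing Q acc with
  | zero => simp [chainAux, rabinSeq]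
  | succ j ih =>
    have hsort :
        (Finset.Icc 1 (j + 1)).sort (· ≥ ·) = (j + 1) :: (Finset.Icc 1 j).sort (· ≥ ·) := by
      rw [← Finset.insert_Icc_right_eq_Icc_add_one (by omega)]
      exact Finset.sort_insert _ (fun b hb => (Finset.mem_Icc.mp hb).2.trans j.le_succ) (by simp)
    have hQj : Q ∩ (Rp (j + 1))ᶜ = (Rp (j + 1))ᶜ := Set.inter_eq_right.mpr (hQ _ (by simp))
    rw [hsort, chainAux_succ, rabinSeq, hQj]
    refine congrArg nuMu <| funext₂ fun _ _ =>
      ih (hR.mono (Set.Icc_subset_Icc_right j.le_succ)) _ _ fun i hi => ?_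
    have hi := Finset.mem_Icc.mp hi
    exact Set.compl_subset_compl.mpr (hR ⟨hi.1, by omega⟩ ⟨by omega, le_rfl⟩ (by omega))

end LiveGameGraph

theorem rabin_fixpoint_eq_chain_fixpoint_general {V : Type*}
    (Gm : LiveGameGraph V) (k : ℕ) (Gp Rp : ℕ → Set V)
    (hchainR : ∀ j, 1 ≤ j → j < k → Rp (j + 1) ⊆ Rp j)
    (hchainG : ∀ j, 1 ≤ j → j < k → Gp (j + 1) ⊆ Gp j) :
    Gm.rabinZ Gp Rp k = Gm.chainZ Gp Rp k := by
  have hR := antitoneOn_Icc_of_succ_le hchainR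
  have hG := antitoneOn_Icc_of_succ_le hchainG
  refine congrArg gfpSet <| funext fun _ => congrArg lfpSet <| funext fun _ => ?_
  rw [Gm.rabinAux_eq_rabinSeq_sort hR hG k _ (by simp) (by simp),
    Gm.chainAux_eq_rabinSeq_sort k hR _ _ fun _ _ => Set.compl_empty ▸ Set.subset_univ _]

/-- under the chain condition, the permutation-based Rabin fixpoint
equals the chain fixpoint. -/
theorem rabin_fixpoint_eq_chain_fixpoint {V : Type*} [Fintype V]
    (Gm : LiveGameGraph V) (k : ℕ) (Gp Rp : ℕ → Set V)
    (hchainR : ∀ j, 1 ≤ j → j < k → Rp (j + 1) ⊆ Rp j)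
    (hchainG : ∀ j, 1 ≤ j → j < k → Gp (j + 1) ⊆ Gp j) :
    Gm.rabinZ Gp Rp k = Gm.chainZ Gp Rp k :=
  rabin_fixpoint_eq_chain_fixpoint_general Gm k Gp Rp hchainR hchainG
end

section
/- Let V be a finite set, P a finite index set, and for each p ∈ P let R̄_p, G_p ⊆ V, and let Q ⊆ V with Q_p := Q ∩ R̄_p for each p ∈ P. For an infinite sequence π : ℕ → V define: π ⊨ □A iff π(i) ∈ A for all i; π ⊨ ◇□A iff π(i) ∈ A for all but finitely many i; π ⊨ □◇A iff π(i) ∈ A for infinitely many i; and π satisfies ◇ψ for a tail property ψ iff some suffix of π satisfies ψ. For each p ∈ P let ψ'_p be the property: (□Q_p ∧ □◇G_p) ∨ (□Q_p ∧ ⋁_{i ∈ P∖{p}} (◇□R̄_i ∧ □◇G_i)). Then for every infinite sequence π : ℕ → V, π satisfies □Q ∧ ◇( ⋁_{p∈P} ψ'_p ) if and only if π satisfies □Q ∧ ⋁_{p∈P} ( ◇□R̄_p ∧ □◇G_p ). -/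
/-- □Q ∧ ◇(⋁_p ψ'_p) is equivalent to □Q ∧ ⋁_p (◇□R̄_p ∧ □◇G_p),
where ψ'_p = (□Q_p ∧ □◇G_p) ∨ (□Q_p ∧ ⋁_{q ≠ p} (◇□R̄_q ∧ □◇G_q)) and
Q_p = Q ∩ R̄_p.  The outer ◇ is interpreted by passing to a suffix. -/
theorem local_rabin_property_equiv {V : Type*} [Fintype V]
    {P : Type*} [Fintype P]
    (Rbar Gg : P → Set V) (Q : Set V) (π : ℕ → V) :
    ((∀ i, π i ∈ Q) ∧ ∃ k : ℕ, ∃ p : P,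
        ((∀ i, π (i + k) ∈ Q ∩ Rbar p) ∧ (∀ N, ∃ i ≥ N, π (i + k) ∈ Gg p)) ∨
        ((∀ i, π (i + k) ∈ Q ∩ Rbar p) ∧ ∃ q : P, q ≠ p ∧
          (∃ N, ∀ i ≥ N, π (i + k) ∈ Rbar q) ∧ (∀ N, ∃ i ≥ N, π (i + k) ∈ Gg q)))
    ↔
    ((∀ i, π i ∈ Q) ∧ ∃ p : P,
        (∃ N, ∀ i ≥ N, π i ∈ Rbar p) ∧ (∀ N, ∃ i ≥ N, π i ∈ Gg p)) := by
  constructor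
  · rintro ⟨hQ, k, p, ⟨hQp, hG⟩ | ⟨hQp, q, hqp, ⟨N, hR⟩, hG⟩⟩
    · refine ⟨hQ, p, ⟨k, fun i hi => ?_⟩, fun N => ?_⟩
      · have := (hQp (i - k)).2
        rwa [Nat.sub_add_cancel hi] at this
      · obtain ⟨i, hi, hg⟩ := hG N
        exact ⟨i + k, le_trans hi (Nat.le_add_right _ _), hg⟩
    · refine ⟨hQ, q, ⟨N + k, fun i hi => ?_⟩, fun M => ?_⟩
      · have := hR (i - k) (by omega)
        rwa [Nat.sub_add_cancel (by omega)] at this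
      · obtain ⟨i, hi, hg⟩ := hG M
        exact ⟨i + k, le_trans hi (Nat.le_add_right _ _), hg⟩
  · rintro ⟨hQ, p, ⟨N, hR⟩, hG⟩
    refine ⟨hQ, N, p, Or.inl ⟨fun i => ⟨hQ _, hR _ (Nat.le_add_left _ _)⟩, fun M => ?_⟩⟩
    obtain ⟨i, hi, hg⟩ := hG (M + N)
    refine ⟨i - N, by omega, ?_⟩
    rwa [Nat.sub_add_cancel (by omega)]
end
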